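/- Let X be a compact metric space and μ a finite Borel measure on X. Then the set { f ∈ C(X,X) : μ(CR(f)) = 0 } is a Gδ subset of C(X,X). -/

import Mathlib

/-!
For `ε > 0` let `CR_ε(f)` be the set of points admitting a periodic `ε`-chain, so that
`CR(f) = ⋂_ε CR_ε(f)`. Perturbing the end points of a chain shows `closure CR_ε(f) ⊆ CR_ε'(f)` for
`ε < ε'`, so by compactness every open `U ⊇ CR(f)` already contains some `CR_ε(f)`; and a map
`g` that is `δ`-close to `f` has `CR(g) ⊆ CR_η(g) ⊆ CR_{η + δ}(f)` for every `η > 0`. Hence `f ↦ CR(f)` is upper semicontinuous.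
By outer regularity, `μ(CR(f)) < r` then holds on a neighbourhood of `f`, so
`{f | μ(CR(f)) = 0} = ⋂ₙ {f | μ(CR(f)) < 1/n}` is a countable intersection of open sets.
-/

open Metric Set

variable {X : Type*} [MetricSpace X]

/-- The set of chain recurrent points of `f`. -/
def ChainRec (f : X → X) : Set X :=
  {x | ∀ ε > (0:ℝ), ∃ n : ℕ, 0 < n ∧ ∃ c : ℕ → X, c 0 = x ∧ c n = x ∧
    ∀ i < n, dist (f (c i)) (c (i+1)) < ε}

/-- The chain recurrent set of `f` restricted to a subset `A` (chains lie in `A`),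
    i.e. the chain recurrent set of `f` as a self-map of the subspace `A`. -/
def ChainRecIn (f : X → X) (A : Set X) : Set X :=
  {x | x ∈ A ∧ ∀ ε > (0:ℝ), ∃ n : ℕ, 0 < n ∧ ∃ c : ℕ → X, (∀ i ≤ n, c i ∈ A) ∧
    c 0 = x ∧ c n = x ∧ ∀ i < n, dist (f (c i)) (c (i+1)) < ε}

open Filter Topology MeasureTheory
open scoped ENNReal

def IsEpsChain (f : X → X) (ε : ℝ) (n : ℕ) (c : ℕ → X) : Prop :=
  ∀ i < n, dist (f (c i)) (c (i + 1)) < ε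

def EpsChainRec (f : X → X) (ε : ℝ) : Set X :=
  {x | ∃ n : ℕ, 0 < n ∧ ∃ c : ℕ → X, c 0 = x ∧ c n = x ∧ IsEpsChain f ε n c}

namespace IsEpsChain

variable {f g : X → X} {ε ε' : ℝ} {n : ℕ} {c d : ℕ → X}

lemma mono (hc : IsEpsChain f ε n c) (h : ε ≤ ε') : IsEpsChain f ε' n c :=
  fun i hi => (hc i hi).trans_le h

lemma of_dist_le {a b : ℝ} (hc : IsEpsChain f ε n c)
    (hfg : ∀ i < n, dist (g (d i)) (f (c i)) ≤ a)
    (hcd : ∀ i < n, dist (c (i + 1)) (d (i + 1)) ≤ b) :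
    IsEpsChain g (a + ε + b) n d := fun i hi =>
  calc dist (g (d i)) (d (i + 1))
      ≤ dist (g (d i)) (f (c i)) + dist (f (c i)) (c (i + 1)) + dist (c (i + 1)) (d (i + 1)) :=
        dist_triangle4 _ _ _ _
    _ < a + ε + b := by linarith [hfg i hi, hc i hi, hcd i hi]

end IsEpsChain

section EpsChainRec

variable {f g : X → X} {ε ε' : ℝ}

lemma chainRec_eq_iInter_epsChainRec (f : X → X) : ChainRec f = ⋂ ε > 0, EpsChainRec f ε := by
  ext x
  simp only [mem_iInter₂]
  rfl

lemma epsChainRec_mono (f : X → X) (h : ε ≤ ε') : EpsChainRec f ε ⊆ EpsChainRec f ε' := by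
  rintro x ⟨n, hn, c, h0, hn', hc⟩
  exact ⟨n, hn, c, h0, hn', hc.mono h⟩

lemma epsChainRec_subset_of_dist_le {δ : ℝ} (h : ∀ x, dist (g x) (f x) ≤ δ) :
    EpsChainRec g ε ⊆ EpsChainRec f (δ + ε) := by
  rintro x ⟨n, hn, c, h0, hn', hc⟩
  refine ⟨n, hn, c, h0, hn', ?_⟩
  simpa using hc.of_dist_le (g := f) (a := δ) (b := 0)
    (fun i _ => (dist_comm (f (c i)) (g (c i))).trans_le (h _)) (fun i _ => by simp)

lemma closure_epsChainRec_subset (hf : Continuous f) (h : ε < ε') :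
    closure (EpsChainRec f ε) ⊆ EpsChainRec f ε' := by
  classical
  intro x hx
  set η := (ε' - ε) / 2 with hη_def
  have hη : 0 < η := half_pos (sub_pos.2 h)
  obtain ⟨δ, hδ, hfδ⟩ := Metric.continuousAt_iff.1 hf.continuousAt η hη
  obtain ⟨y, ⟨n, hn, c, h0, hn', hc⟩, hxy⟩ := Metric.mem_closure_iff.1 hx _ (lt_min hδ hη)
  rw [dist_comm, lt_min_iff] at hxy
  -- move every visit of the chain to `y` over to `x`
  set d : ℕ → X := fun i => if c i = y then x else c i
  have hfd : ∀ i, dist (f (d i)) (f (c i)) ≤ η := fun i => by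
    by_cases hi : c i = y
    · simpa [d, hi, dist_comm] using (hfδ hxy.1).le
    · simp [d, hi, hη.le]
  have hcd : ∀ i, dist (c i) (d i) ≤ η := fun i => by
    by_cases hi : c i = y
    · simpa [d, hi] using hxy.2.le
    · simp [d, hi, hη.le]
  refine ⟨n, hn, d, by simp [d, h0], by simp [d, hn'], ?_⟩
  exact (hc.of_dist_le (fun i _ => hfd i) (fun i _ => hcd (i + 1))).mono (by linarith [hη_def])

lemma iInter_closure_epsChainRec_subset (hf : Continuous f) :
    ⋂ k : ℕ, closure (EpsChainRec f (1 / (k + 1))) ⊆ ChainRec f := by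
  intro x hx
  rw [chainRec_eq_iInter_epsChainRec, mem_iInter₂]
  intro ε hε
  obtain ⟨k, hk⟩ := exists_nat_one_div_lt hε
  exact closure_epsChainRec_subset hf hk (mem_iInter.1 hx k)

lemma exists_epsChainRec_subset [CompactSpace X] (hf : Continuous f) {U : Set X}
    (hU : IsOpen U) (hfU : ChainRec f ⊆ U) : ∃ ε > 0, EpsChainRec f ε ⊆ U := by
  set A : ℕ → Set X := fun k => closure (EpsChainRec f (1 / (k + 1)))
  have hA : Antitone A := fun k l hkl =>
    closure_mono (epsChainRec_mono f (Nat.one_div_le_one_div hkl))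
  have hcover : Uᶜ ⊆ ⋃ k, (A k)ᶜ := by
    rw [← compl_iInter]
    exact compl_subset_compl.2 ((iInter_closure_epsChainRec_subset hf).trans hfU)
  obtain ⟨k, hk⟩ := hU.isClosed_compl.isCompact.elim_directed_cover (fun k => (A k)ᶜ)
    (fun k => isClosed_closure.isOpen_compl) hcover
    (Monotone.directed_le fun _ _ hkl => compl_subset_compl.2 (hA hkl))
  exact ⟨1 / (k + 1), Nat.one_div_pos_of_nat,
    subset_closure.trans (compl_subset_compl.1 hk)⟩

lemma eventually_chainRec_subset [CompactSpace X] (f : C(X, X)) {U : Set X} (hU : IsOpen U)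
    (hfU : ChainRec (⇑f) ⊆ U) : ∀ᶠ g : C(X, X) in 𝓝 f, ChainRec (⇑g) ⊆ U := by
  obtain ⟨ε, hε, hεU⟩ := exists_epsChainRec_subset f.continuous hU hfU
  refine Metric.eventually_nhds_iff.2 ⟨ε / 2, half_pos hε, fun g hg => ?_⟩
  have hclose : ∀ x, dist (g x) (f x) ≤ ε / 2 := fun x =>
    (ContinuousMap.dist_apply_le_dist x).trans hg.le
  calc ChainRec (⇑g) ⊆ EpsChainRec g (ε / 2) := by
        rw [chainRec_eq_iInter_epsChainRec]
        exact biInter_subset_of_mem (half_pos hε)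
    _ ⊆ EpsChainRec f (ε / 2 + ε / 2) := epsChainRec_subset_of_dist_le hclose
    _ = EpsChainRec f ε := by rw [add_halves]
    _ ⊆ U := hεU

end EpsChainRec

section UpperSemicontinuous

variable {Y Z : Type*} [TopologicalSpace Y] [TopologicalSpace Z] [MeasurableSpace Z]
  (μ : Measure Z) [μ.OuterRegular] {S : Y → Set Z}

lemma isOpen_setOf_measure_lt
    (hS : ∀ y U, IsOpen U → S y ⊆ U → ∀ᶠ y' in 𝓝 y, S y' ⊆ U) (r : ℝ≥0∞) :
    IsOpen {y | μ (S y) < r} := by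
  refine isOpen_iff_mem_nhds.2 fun y hy => ?_
  obtain ⟨U, hSU, hU, hμU⟩ := Set.exists_isOpen_lt_of_lt (S y) r hy
  filter_upwards [hS y U hU hSU] with y' hy' using (measure_mono hy').trans_lt hμU

lemma isGδ_setOf_measure_eq_zero
    (hS : ∀ y U, IsOpen U → S y ⊆ U → ∀ᶠ y' in 𝓝 y, S y' ⊆ U) :
    IsGδ {y | μ (S y) = 0} := by
  have h : {y | μ (S y) = 0} = ⋂ n : ℕ, {y | μ (S y) < (n : ℝ≥0∞)⁻¹} := by
    ext y
    simp only [mem_ofPred_eq, mem_iInter]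
    refine ⟨fun h n => h ▸ ENNReal.inv_pos.2 (ENNReal.natCast_ne_top n), fun h => ?_⟩
    by_contra hne
    obtain ⟨n, hn⟩ := ENNReal.exists_inv_nat_lt hne
    exact (h n).not_gt hn
  rw [h]
  exact IsGδ.iInter_of_isOpen fun n => isOpen_setOf_measure_lt μ hS _

end UpperSemicontinuous

theorem stmt12 [CompactSpace X] [MeasurableSpace X] [BorelSpace X] (μ : MeasureTheory.Measure X)
    [MeasureTheory.IsFiniteMeasure μ] :
    IsGδ {f : C(X, X) | μ (ChainRec (⇑f)) = 0} :=
  isGδ_setOf_measure_eq_zero μ fun f _ hU hfU => eventually_chainRec_subset f hU hfU
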